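/- In a WQO X, every upwards-closed (resp. downwards-closed) subset has a unique minimal finite decomposition into up primes (resp. down primes): if ⋃_{i<n} Pᵢ = ⋃_{j<m} P'ⱼ are two decompositions into primes with no containments among distinct components of the same decomposition, then {P₁,...,Pₙ} = {P'₁,...,P'ₘ}. -/

import Mathlib

/-!
A prime up-closed set covered by finitely many up-closed sets lies in one of them. Hence each
component of one decomposition lies in a component of the other, which in turn lies in a component
of the first; minimality forces these three sets to be equal, so every component of either
decomposition is a component of the other. Down-closed sets of `X` are the up-closed sets of `Xᵒᵈ`,
which gives the dual statement.
-/

def UpClosed {X : Type*} [Preorder X] (U : Set X) : Prop :=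
  ∀ ⦃x y : X⦄, x ∈ U → x ≤ y → y ∈ U

def DownClosed {X : Type*} [Preorder X] (D : Set X) : Prop :=
  ∀ ⦃x y : X⦄, x ∈ D → y ≤ x → y ∈ D

def UpPrime {X : Type*} [Preorder X] (U : Set X) : Prop :=
  U.Nonempty ∧ UpClosed U ∧
    ∀ U₁ U₂ : Set X, UpClosed U₁ → UpClosed U₂ → U ⊆ U₁ ∪ U₂ → U ⊆ U₁ ∨ U ⊆ U₂

def DownPrime {X : Type*} [Preorder X] (D : Set X) : Prop :=
  D.Nonempty ∧ DownClosed D ∧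
    ∀ D₁ D₂ : Set X, DownClosed D₁ → DownClosed D₂ → D ⊆ D₁ ∪ D₂ → D ⊆ D₁ ∨ D ⊆ D₂

section UpPrime

variable {X : Type*} [Preorder X]

theorem UpClosed.sUnion {S : Set (Set X)} (hS : ∀ s ∈ S, UpClosed s) : UpClosed (⋃₀ S) := by
  rintro x y ⟨s, hsS, hxs⟩ hxy
  exact ⟨s, hsS, hS s hsS hxs hxy⟩

theorem UpPrime.exists_subset_of_subset_sUnion {p : Set X} (hp : UpPrime p)
    {Q : Finset (Set X)} (hQ : ∀ q ∈ Q, UpClosed q) (hpQ : p ⊆ ⋃₀ (↑Q : Set (Set X))) :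
    ∃ q ∈ Q, p ⊆ q := by
  classical
  induction Q using Finset.induction with
  | empty =>
    obtain ⟨x, hx⟩ := hp.1
    simpa using hpQ hx
  | @insert a Q _ ih =>
    have hQ' : ∀ q ∈ Q, UpClosed q := fun q hq => hQ q (Finset.mem_insert_of_mem hq)
    rw [Finset.coe_insert, Set.sUnion_insert] at hpQ
    rcases hp.2.2 a _ (hQ a (Finset.mem_insert_self a Q)) (UpClosed.sUnion hQ') hpQ with hpa | hpQ
    · exact ⟨a, Finset.mem_insert_self a Q, hpa⟩
    · obtain ⟨q, hq, hpq⟩ := ih hQ' hpQ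
      exact ⟨q, Finset.mem_insert_of_mem hq, hpq⟩

theorem subset_of_sUnion_eq_of_upPrime {P P' : Finset (Set X)}
    (hP : ∀ p ∈ P, UpPrime p) (hP' : ∀ p ∈ P', UpPrime p)
    (hPmin : ∀ p ∈ P, ∀ q ∈ P, p ⊆ q → p = q)
    (hPP' : ⋃₀ (↑P : Set (Set X)) = ⋃₀ (↑P' : Set (Set X))) : P ⊆ P' := by
  intro p hp
  obtain ⟨q, hq, hpq⟩ := (hP p hp).exists_subset_of_subset_sUnion (fun q hq => (hP' q hq).2.1)
    (hPP' ▸ Set.subset_sUnion_of_mem (Finset.mem_coe.2 hp))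
  obtain ⟨r, hr, hqr⟩ := (hP' q hq).exists_subset_of_subset_sUnion (fun r hr => (hP r hr).2.1)
    (hPP' ▸ Set.subset_sUnion_of_mem (Finset.mem_coe.2 hq))
  have hpr : p = r := hPmin p hp r hr (hpq.trans hqr)
  have hpq : p = q := hpq.antisymm (hpr ▸ hqr)
  exact hpq ▸ hq

theorem eq_of_sUnion_eq_of_upPrime {P P' : Finset (Set X)}
    (hP : ∀ p ∈ P, UpPrime p) (hP' : ∀ p ∈ P', UpPrime p)
    (hPmin : ∀ p ∈ P, ∀ q ∈ P, p ⊆ q → p = q) (hP'min : ∀ p ∈ P', ∀ q ∈ P', p ⊆ q → p = q)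
    (hPP' : ⋃₀ (↑P : Set (Set X)) = ⋃₀ (↑P' : Set (Set X))) : P = P' :=
  (subset_of_sUnion_eq_of_upPrime hP hP' hPmin hPP').antisymm
    (subset_of_sUnion_eq_of_upPrime hP' hP hP'min hPP'.symm)

end UpPrime

theorem canonical_decomposition_unique_general {X : Type*} [Preorder X] :
    (∀ P P' : Finset (Set X),
      (∀ p ∈ P, UpPrime p) → (∀ p ∈ P', UpPrime p) →
      (∀ p ∈ P, ∀ q ∈ P, p ⊆ q → p = q) →
      (∀ p ∈ P', ∀ q ∈ P', p ⊆ q → p = q) →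
      ⋃₀ (↑P : Set (Set X)) = ⋃₀ (↑P' : Set (Set X)) → P = P') ∧
    (∀ P P' : Finset (Set X),
      (∀ p ∈ P, DownPrime p) → (∀ p ∈ P', DownPrime p) →
      (∀ p ∈ P, ∀ q ∈ P, p ⊆ q → p = q) →
      (∀ p ∈ P', ∀ q ∈ P', p ⊆ q → p = q) →
      ⋃₀ (↑P : Set (Set X)) = ⋃₀ (↑P' : Set (Set X)) → P = P') :=
  ⟨fun _ _ => eq_of_sUnion_eq_of_upPrime, fun _ _ => eq_of_sUnion_eq_of_upPrime (X := Xᵒᵈ)⟩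

theorem canonical_decomposition_unique {X : Type*} [Preorder X]
    (hwqo : ∀ f : ℕ → X, ∃ i j : ℕ, i < j ∧ f i ≤ f j) :
    (∀ P P' : Finset (Set X),
      (∀ p ∈ P, UpPrime p) → (∀ p ∈ P', UpPrime p) →
      (∀ p ∈ P, ∀ q ∈ P, p ⊆ q → p = q) →
      (∀ p ∈ P', ∀ q ∈ P', p ⊆ q → p = q) →
      ⋃₀ (↑P : Set (Set X)) = ⋃₀ (↑P' : Set (Set X)) → P = P') ∧
    (∀ P P' : Finset (Set X),
      (∀ p ∈ P, DownPrime p) → (∀ p ∈ P', DownPrime p) →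
      (∀ p ∈ P, ∀ q ∈ P, p ⊆ q → p = q) →
      (∀ p ∈ P', ∀ q ∈ P', p ⊆ q → p = q) →
      ⋃₀ (↑P : Set (Set X)) = ⋃₀ (↑P' : Set (Set X)) → P = P') :=
  canonical_decomposition_unique_general
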